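/- The identity ∑_{k=0}^∞ (84k²-4k+1)·C(6k,3k) / 512^k = 4√2 holds if and only if the identity ∑_{k=0}^∞ (42k-5)·C(6k,3k) / ((6k-1)(6k-5)·512^k) = -√2/2 holds (both series converge at geometric rates). -/

import Mathlib

open Finset

private lemma choose_le_two_pow' (n k : ℕ) : n.choose k ≤ 2 ^ n := by
  rcases le_or_gt k n with h | h
  · rw [← Nat.sum_range_choose n]
    exact Finset.single_le_sum (fun i _ => Nat.zero_le _)
      (Finset.mem_range.mpr (Nat.lt_succ_of_le h))
  · simp [Nat.choose_eq_zero_of_lt h]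

private lemma key_ratio (k : ℕ) :
    ((6 * k + 6).choose (3 * k + 3) : ℝ) * ((3 * k + 1) * (3 * k + 2) * (3 * k + 3)) =
      ((6 * k).choose (3 * k) : ℝ) * (8 * (6 * k + 1) * (6 * k + 3) * (6 * k + 5)) := by
  have h1 := Nat.choose_mul_factorial_mul_factorial (show 3 * k ≤ 6 * k by omega)
  have h2 := Nat.choose_mul_factorial_mul_factorial (show 3 * k + 3 ≤ 6 * k + 6 by omega)
  rw [show 6 * k - 3 * k = 3 * k by omega] at h1
  rw [show 6 * k + 6 - (3 * k + 3) = 3 * k + 3 by omega] at h2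
  set F : ℕ → ℝ := fun n => (Nat.factorial n : ℝ) with hF
  have c1 : ((6 * k).choose (3 * k) : ℝ) * F (3 * k) * F (3 * k) = F (6 * k) := by
    simp only [hF]; exact_mod_cast congrArg (Nat.cast : ℕ → ℝ) h1
  have c2 : ((6 * k + 6).choose (3 * k + 3) : ℝ) * F (3 * k + 3) * F (3 * k + 3) =
      F (6 * k + 6) := by
    simp only [hF]; exact_mod_cast congrArg (Nat.cast : ℕ → ℝ) h2
  have f3 : F (3 * k + 3) = ((3 * k : ℝ) + 3) * ((3 * k + 2)) * ((3 * k + 1)) * F (3 * k) := by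
    simp only [hF, show 3 * k + 3 = (3 * k + 2) + 1 from rfl, Nat.factorial_succ,
      show 3 * k + 2 = (3 * k + 1) + 1 from rfl,
      show 3 * k + 1 = (3 * k) + 1 from rfl]
    push_cast; ring
  have f6 : F (6 * k + 6) = ((6 * k : ℝ) + 6) * ((6 * k + 5)) * ((6 * k + 4)) * ((6 * k + 3)) *
      ((6 * k + 2)) * ((6 * k + 1)) * F (6 * k) := by
    simp only [hF, show 6 * k + 6 = (6 * k + 5) + 1 from rfl, Nat.factorial_succ,
      show 6 * k + 5 = (6 * k + 4) + 1 from rfl,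
      show 6 * k + 4 = (6 * k + 3) + 1 from rfl,
      show 6 * k + 3 = (6 * k + 2) + 1 from rfl,
      show 6 * k + 2 = (6 * k + 1) + 1 from rfl,
      show 6 * k + 1 = (6 * k) + 1 from rfl]
    push_cast; ring
  have hne : F (3 * k) ≠ 0 := by
    simp only [hF]; exact_mod_cast (3 * k).factorial_ne_zero
  have hne3 : F (3 * k + 3) ≠ 0 := by
    simp only [hF]; exact_mod_cast (3 * k + 3).factorial_ne_zero
  have hC : ((6 * k).choose (3 * k) : ℝ) = F (6 * k) / (F (3 * k) * F (3 * k)) := by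
    field_simp; linear_combination c1
  have hC' : ((6 * k + 6).choose (3 * k + 3) : ℝ) =
      F (6 * k + 6) / (F (3 * k + 3) * F (3 * k + 3)) := by
    field_simp; linear_combination c2
  rw [hC, hC', f3, f6]
  field_simp
  ring

noncomputable def tAux (k : ℕ) : ℝ :=
  (3456 * (k : ℝ) ^ 4 - 2880 * k ^ 3 + 192 * k ^ 2 + 128 * k) * ((6 * k).choose (3 * k)) /
    ((6 * (k : ℝ) - 1) * (6 * k - 5) * 512 ^ k)

private lemma d1ne (k : ℕ) : (6 * (k : ℝ) - 1) ≠ 0 := by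
  intro h
  have h' : ((6 * k : ℕ) : ℝ) = 1 := by push_cast; linarith
  have : 6 * k = 1 := by exact_mod_cast h'
  omega

private lemma d5ne (k : ℕ) : (6 * (k : ℝ) - 5) ≠ 0 := by
  intro h
  have h' : ((6 * k : ℕ) : ℝ) = 5 := by push_cast; linarith
  have : 6 * k = 5 := by exact_mod_cast h'
  omega

private lemma tele (k : ℕ) :
    (84 * (k : ℝ) ^ 2 - 4 * k + 1) * ((6 * k).choose (3 * k)) / 512 ^ k +
      8 * ((42 * (k : ℝ) - 5) * ((6 * k).choose (3 * k)) /
          ((6 * (k : ℝ) - 1) * (6 * k - 5) * 512 ^ k)) =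
    tAux k - tAux (k + 1) := by
  have hkey := key_ratio k
  have h1 := d1ne k
  have h5 := d5ne k
  have h1' : (6 * ((k : ℝ) + 1) - 1) ≠ 0 := by
    have := d1ne (k + 1); push_cast at this ⊢; linarith [this]
  have h5' : (6 * ((k : ℝ) + 1) - 5) ≠ 0 := by
    have := d5ne (k + 1); push_cast at this ⊢; linarith [this]
  have hpow : (512 : ℝ) ^ k ≠ 0 := by positivity
  have hden : ((3 * (k : ℝ) + 1) * (3 * k + 2) * (3 * k + 3)) ≠ 0 := by positivity
  have hC' : ((6 * k + 6).choose (3 * k + 3) : ℝ) =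
      ((6 * k).choose (3 * k) : ℝ) * (8 * (6 * k + 1) * (6 * k + 3) * (6 * k + 5)) /
        ((3 * k + 1) * (3 * k + 2) * (3 * k + 3)) := by
    rw [eq_div_iff hden]; exact hkey
  unfold tAux
  rw [show 6 * (k + 1) = 6 * k + 6 by ring, show 3 * (k + 1) = 3 * k + 3 by ring]
  push_cast
  rw [hC']
  have h1r : (k : ℝ) * 6 - 1 ≠ 0 := by rwa [mul_comm]
  have h5r : (k : ℝ) * 6 - 5 ≠ 0 := by rwa [mul_comm]
  field_simp
  ring

private lemma tAux_nonneg (k : ℕ) : 0 ≤ tAux k := by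
  unfold tAux
  have hd : (1 : ℝ) ≤ (6 * (k : ℝ) - 1) * (6 * k - 5) := by
    rcases Nat.eq_zero_or_pos k with h | h
    · subst h; norm_num
    · have hk : (1 : ℝ) ≤ (k : ℝ) := by exact_mod_cast h
      nlinarith
  have hp : 0 ≤ 3456 * (k : ℝ) ^ 4 - 2880 * k ^ 3 + 192 * k ^ 2 + 128 * k := by
    rcases Nat.eq_zero_or_pos k with h | h
    · subst h; norm_num
    · have hk : (1 : ℝ) ≤ (k : ℝ) := by exact_mod_cast h
      nlinarith [pow_nonneg (le_trans zero_le_one hk) 3]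
  apply div_nonneg
  · exact mul_nonneg hp (Nat.cast_nonneg _)
  · positivity

private lemma tAux_le (k : ℕ) :
    tAux k ≤ (3456 * (k : ℝ) ^ 4 + 192 * k ^ 2 + 128 * k) * (1 / 8) ^ k := by
  have hd : (1 : ℝ) ≤ (6 * (k : ℝ) - 1) * (6 * k - 5) := by
    rcases Nat.eq_zero_or_pos k with h | h
    · subst h; norm_num
    · have hk : (1 : ℝ) ≤ (k : ℝ) := by exact_mod_cast h
      nlinarith
  have hp : 0 ≤ 3456 * (k : ℝ) ^ 4 - 2880 * k ^ 3 + 192 * k ^ 2 + 128 * k := by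
    rcases Nat.eq_zero_or_pos k with h | h
    · subst h; norm_num
    · have hk : (1 : ℝ) ≤ (k : ℝ) := by exact_mod_cast h
      nlinarith [pow_nonneg (le_trans zero_le_one hk) 3]
  have hCle : (((6 * k).choose (3 * k) : ℕ) : ℝ) ≤ 64 ^ k := by
    have := choose_le_two_pow' (6 * k) (3 * k)
    have h2 : ((6 * k).choose (3 * k) : ℕ) ≤ 64 ^ k := by
      calc ((6 * k).choose (3 * k) : ℕ) ≤ 2 ^ (6 * k) := this
        _ = 64 ^ k := by rw [pow_mul]; norm_num
    exact_mod_cast h2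
  have hC0 : (0:ℝ) ≤ (((6 * k).choose (3 * k) : ℕ) : ℝ) := Nat.cast_nonneg _
  have step1 : tAux k ≤
      ((3456 * (k : ℝ) ^ 4 - 2880 * k ^ 3 + 192 * k ^ 2 + 128 * k) * 64 ^ k) /
        (1 * 512 ^ k) := by
    unfold tAux
    exact div_le_div₀ (by positivity) (mul_le_mul_of_nonneg_left hCle hp)
      (by positivity) (mul_le_mul_of_nonneg_right hd (by positivity))
  calc tAux k ≤ _ := step1
    _ = (3456 * (k : ℝ) ^ 4 - 2880 * k ^ 3 + 192 * k ^ 2 + 128 * k) * (1 / 8) ^ k := by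
        rw [one_mul, mul_div_assoc, ← div_pow]
        norm_num
    _ ≤ (3456 * (k : ℝ) ^ 4 + 192 * k ^ 2 + 128 * k) * (1 / 8) ^ k := by
        have : (0:ℝ) ≤ (1/8 : ℝ) ^ k := by positivity
        have hk3 : (0:ℝ) ≤ 2880 * (k:ℝ)^3 := by positivity
        nlinarith

private lemma summable_bound :
    Summable (fun k : ℕ => (3456 * (k : ℝ) ^ 4 + 192 * k ^ 2 + 128 * k) * (1 / 8) ^ k) := by
  have hr : ‖(1 / 8 : ℝ)‖ < 1 := by
    rw [Real.norm_eq_abs, abs_of_pos (by norm_num : (0:ℝ) < 1/8)]; norm_num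
  have s4 := summable_pow_mul_geometric_of_norm_lt_one (R := ℝ) 4 hr
  have s2 := summable_pow_mul_geometric_of_norm_lt_one (R := ℝ) 2 hr
  have s1 := summable_pow_mul_geometric_of_norm_lt_one (R := ℝ) 1 hr
  have := ((s4.mul_left 3456).add (s2.mul_left 192)).add (s1.mul_left 128)
  apply this.congr
  intro k
  push_cast
  ring

private lemma summable_tAux : Summable tAux :=
  Summable.of_nonneg_of_le tAux_nonneg tAux_le summable_bound

private lemma hasSum_tele : HasSum (fun k : ℕ => tAux k - tAux (k + 1)) 0 := by
  have ht := summable_tAux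
  have ht1 : Summable (fun k : ℕ => tAux (k + 1)) := (summable_nat_add_iff 1).2 ht
  have hnorm : Summable (fun k : ℕ => ‖tAux k - tAux (k + 1)‖) := by
    apply Summable.of_nonneg_of_le (fun k => norm_nonneg _)
      (fun k => ?_) (ht.add ht1)
    rw [Real.norm_eq_abs]
    have := tAux_nonneg k; have := tAux_nonneg (k + 1)
    rw [abs_le]; constructor <;> linarith
  rw [hasSum_iff_tendsto_nat_of_summable_norm hnorm]
  have hpart : ∀ n : ℕ, ∑ i ∈ Finset.range n, (tAux i - tAux (i + 1)) = tAux 0 - tAux n :=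
    fun n => Finset.sum_range_sub' tAux n
  have ht0 : tAux 0 = 0 := by unfold tAux; norm_num
  simp only [hpart, ht0, zero_sub]
  simpa using (ht.tendsto_atTop_zero).neg

theorem series_stmt_18 :
    HasSum (fun k : ℕ =>
        (84 * (k : ℝ) ^ 2 - 4 * k + 1) * (Nat.choose (6 * k) (3 * k)) / 512 ^ k)
      (4 * Real.sqrt 2)
    ↔ HasSum (fun k : ℕ =>
        (42 * (k : ℝ) - 5) * (Nat.choose (6 * k) (3 * k)) /
          ((6 * (k : ℝ) - 1) * (6 * k - 5) * 512 ^ k))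
      (-(Real.sqrt 2 / 2)) := by
  set f : ℕ → ℝ := fun k =>
    (84 * (k : ℝ) ^ 2 - 4 * k + 1) * (Nat.choose (6 * k) (3 * k)) / 512 ^ k with hf
  set g : ℕ → ℝ := fun k =>
    (42 * (k : ℝ) - 5) * (Nat.choose (6 * k) (3 * k)) /
      ((6 * (k : ℝ) - 1) * (6 * k - 5) * 512 ^ k) with hg
  have hsum : HasSum (fun k => f k + 8 * g k) 0 := by
    have : (fun k : ℕ => f k + 8 * g k) = fun k => tAux k - tAux (k + 1) := by
      funext k; exact tele k
    rw [this]; exact hasSum_tele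
  constructor
  · intro hF
    have h8g : HasSum (fun k => 8 * g k) (0 - 4 * Real.sqrt 2) := by
      have := hsum.sub hF
      simpa using this
    have := h8g.div_const 8
    have heq : (fun k => 8 * g k / 8) = g := by funext k; field_simp
    rw [heq] at this
    convert this using 1
    · rfl
    ring
  · intro hG
    have h8g : HasSum (fun k => 8 * g k) (8 * -(Real.sqrt 2 / 2)) := hG.mul_left 8
    have := hsum.sub h8g
    have heq : (fun k => (f k + 8 * g k) - 8 * g k) = f := by funext k; ring
    rw [heq] at this
    convert this using 1
    · rfl
    ring
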